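/- Let A and B be Köthe matrices such that λ^∞(A) and λ^∞(B) are closed under pointwise multiplication (hence are *-algebras under pointwise operations and complex conjugation). Then there exists a bijective ℂ-algebra homomorphism Φ : λ^∞(A) → λ^∞(B) if and only if there exists a bijection σ : ℕ → ℕ such that (α) for every q ∈ ℕ₀ there exist r ∈ ℕ₀ and C > 0 with a_{σ(j),q} ≤ C·b_{j,r} for all j ∈ ℕ, and (β) for every r' ∈ ℕ₀ there exist q' ∈ ℕ₀ and C' > 0 with b_{j,r'} ≤ C'·a_{σ(j),q'} for all j ∈ ℕ. -/
import Mathlib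

/-- `a : ℕ → ℕ → ℝ`, `a j q` being the entry `a_{j,q}`, is a Köthe matrix. -/
def IsKotheMatrix (a : ℕ → ℕ → ℝ) : Prop :=
  (∀ j q, 0 ≤ a j q) ∧ (∀ j, ∃ q, 0 < a j q) ∧ (∀ j q, a j q ≤ a j (q + 1))

/-- The Köthe space `λ^∞(A)`. -/
def lambdaInf (a : ℕ → ℕ → ℝ) : Set (ℕ → ℂ) :=
  {ξ | ∀ q : ℕ, ∃ C : ℝ, ∀ j : ℕ, ‖ξ j‖ * a j q ≤ C}

namespace Stmt4Aux

open Classical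

lemma key_lemma (f g : ℕ → ℕ → ℝ) (hf0 : ∀ j q, 0 ≤ f j q)
    (hg0 : ∀ j q, 0 ≤ g j q)
    (hfpos : ∀ j, ∃ q, 0 < f j q)
    (hfmono : ∀ j, ∀ {q q' : ℕ}, q ≤ q' → f j q ≤ f j q')
    (H : ∀ ζ : ℕ → ℂ, (∀ q, ∃ C, ∀ j, ‖ζ j‖ * f j q ≤ C) →
      (∀ r, ∃ C, ∀ j, ‖ζ j‖ * g j r ≤ C)) (r : ℕ) :
    ∃ q C, 0 < C ∧ ∀ j, g j r ≤ C * f j q := by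
  by_contra hcon
  push_neg at hcon
  have neg : ∀ q : ℕ, ∀ C : ℝ, 0 < C → ∃ j, C * f j q < g j r := by
    intro q C hC
    obtain ⟨j, hj⟩ := hcon q C hC
    exact ⟨j, hj⟩
  -- fresh selection
  have fresh : ∀ s : Finset ℕ, ∀ n : ℕ, ∃ j, j ∉ s ∧ (n : ℝ) * f j n < g j r := by
    intro s n
    choose qs hqs using hfpos
    set Q : ℕ := max n (s.sup qs) with hQ
    set S : ℝ := ∑ i ∈ s, g i r / f i Q with hS
    have hSnn : 0 ≤ S := Finset.sum_nonneg fun i _ => div_nonneg (hg0 i r) (hf0 i Q)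
    set C : ℝ := (n : ℝ) + 1 + S with hC
    have hCpos : 0 < C := by positivity
    obtain ⟨j, hj⟩ := neg Q C hCpos
    refine ⟨j, ?_, ?_⟩
    · intro hjs
      have hfQpos : 0 < f j Q := lt_of_lt_of_le (hqs j)
        (hfmono j (le_max_of_le_right (Finset.le_sup hjs)))
      have h1 : g j r / f j Q ≤ S := Finset.single_le_sum
        (fun i _ => div_nonneg (hg0 i r) (hf0 i Q)) hjs
      have h2 : g j r ≤ C * f j Q := by
        rw [hC]
        have : g j r = (g j r / f j Q) * f j Q := (div_mul_cancel₀ _ hfQpos.ne').symm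
        rw [this]
        have hnn : (0:ℝ) ≤ (n : ℝ) + 1 := by positivity
        nlinarith [mul_le_mul_of_nonneg_right h1 hfQpos.le]
      exact absurd h2 (not_le.mpr hj)
    · have h3 : (n : ℝ) * f j n ≤ C * f j Q :=
        mul_le_mul (by rw [hC]; nlinarith) (hfmono j (le_max_left _ _)) (hf0 j n)
          hCpos.le
      exact lt_of_le_of_lt h3 hj
  choose pick hpick1 hpick2 using fresh
  let Fs : ℕ → Finset ℕ := fun n => Nat.rec ∅ (fun m s => insert (pick s m) s) n
  let J : ℕ → ℕ := fun n => pick (Fs n) n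
  have hFs_succ : ∀ n, Fs (n + 1) = insert (J n) (Fs n) := fun n => rfl
  have hmemJ : ∀ n, J n ∈ Fs (n + 1) := fun n => by
    rw [hFs_succ]; exact Finset.mem_insert_self _ _
  have hFsmono : ∀ m n, m ≤ n → Fs m ⊆ Fs n := by
    intro m n h
    induction h with
    | refl => exact subset_rfl
    | step _ ih => exact ih.trans (by rw [hFs_succ]; exact Finset.subset_insert _ _)
  have hJlt : ∀ m n, m < n → J m ≠ J n := by
    intro m n hmn heq
    have h1 : J m ∈ Fs n := hFsmono (m + 1) n hmn (hmemJ m)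
    rw [heq] at h1
    exact hpick1 (Fs n) n h1
  have hJinj : Function.Injective J := by
    intro m n h
    rcases lt_trichotomy m n with h1 | h1 | h1
    · exact absurd h (hJlt m n h1)
    · exact h1
    · exact absurd h.symm (hJlt n m h1)
  have gJpos : ∀ n, 0 < g (J n) r :=
    fun n => lt_of_le_of_lt (mul_nonneg (Nat.cast_nonneg n) (hf0 _ _)) (hpick2 (Fs n) n)
  let ζ : ℕ → ℂ := fun k => if h : ∃ n, J n = k then (((h.choose : ℝ) / g k r : ℝ) : ℂ) else 0
  have hζJ : ∀ n, ζ (J n) = (((n : ℝ) / g (J n) r : ℝ) : ℂ) := by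
    intro n
    have hex : ∃ m, J m = J n := ⟨n, rfl⟩
    have hch : hex.choose = n := hJinj hex.choose_spec
    show dite _ _ _ = _
    rw [dif_pos hex, hch]
  have hζnorm : ∀ n, ‖ζ (J n)‖ = (n : ℝ) / g (J n) r := by
    intro n
    rw [hζJ n, Complex.norm_real, Real.norm_eq_abs,
      abs_of_nonneg (div_nonneg (Nat.cast_nonneg n) (gJpos n).le)]
  have hζmem : ∀ q, ∃ C, ∀ j, ‖ζ j‖ * f j q ≤ C := by
    intro q
    set M : ℝ := ∑ n ∈ Finset.range q, ‖ζ (J n)‖ * f (J n) q with hM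
    have hMnn : 0 ≤ M :=
      Finset.sum_nonneg fun n _ => mul_nonneg (norm_nonneg _) (hf0 _ _)
    refine ⟨1 + M, fun k => ?_⟩
    by_cases hk : ∃ n, J n = k
    · obtain ⟨n, rfl⟩ := hk
      by_cases hnq : n < q
      · have := Finset.single_le_sum
          (f := fun n => ‖ζ (J n)‖ * f (J n) q)
          (fun n _ => mul_nonneg (norm_nonneg _) (hf0 _ _)) (Finset.mem_range.mpr hnq)
        have h1 : ‖ζ (J n)‖ * f (J n) q ≤ M := by rw [hM]; simpa using this
        linarith
      · push_neg at hnq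
        have h1 : ‖ζ (J n)‖ * f (J n) q ≤ ‖ζ (J n)‖ * f (J n) n :=
          mul_le_mul_of_nonneg_left (hfmono _ hnq) (norm_nonneg _)
        have h2 : ‖ζ (J n)‖ * f (J n) n < 1 := by
          rw [hζnorm n, div_mul_eq_mul_div, div_lt_one (gJpos n)]
          exact hpick2 (Fs n) n
        linarith
    · have : ζ k = 0 := dif_neg hk
      rw [this]
      simp only [norm_zero, zero_mul]
      linarith
  obtain ⟨C, hC⟩ := H ζ hζmem r
  obtain ⟨n, hn⟩ := exists_nat_gt C
  have := hC (J n)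
  rw [hζnorm n, div_mul_cancel₀ _ (gJpos n).ne'] at this
  linarith

noncomputable def eSeq (j : ℕ) : ℕ → ℂ := fun k => if k = j then 1 else 0

lemma eSeq_mem {a : ℕ → ℕ → ℝ} (h0 : ∀ j q, 0 ≤ a j q) (j : ℕ) :
    eSeq j ∈ lambdaInf a := by
  intro q
  refine ⟨a j q, fun k => ?_⟩
  by_cases hk : k = j
  · subst hk; simp [eSeq]
  · simp [eSeq, hk, h0 j q]

lemma eSeq_mul_self (j : ℕ) : eSeq j * eSeq j = eSeq j := by
  funext k
  by_cases hk : k = j <;> simp [eSeq, hk]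

lemma eSeq_mul_ne {i j : ℕ} (h : i ≠ j) : eSeq i * eSeq j = 0 := by
  funext k
  by_cases hk : k = i
  · subst hk
    simp [eSeq, h]
  · simp [eSeq, hk]

lemma mul_eSeq (ξ : ℕ → ℂ) (j : ℕ) : ξ * eSeq j = ξ j • eSeq j := by
  funext k
  by_cases hk : k = j
  · subst hk; simp [eSeq]
  · simp [eSeq, hk]

lemma eSeq_ne_zero (j : ℕ) : eSeq j ≠ 0 := by
  intro h
  have := congrFun h j
  simp [eSeq] at this

lemma zero_mem (a : ℕ → ℕ → ℝ) : (0 : ℕ → ℂ) ∈ lambdaInf a :=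
  fun _ => ⟨0, fun _ => by simp⟩

lemma kothe_mono {a : ℕ → ℕ → ℝ} (ha : IsKotheMatrix a) (j : ℕ) {q q' : ℕ}
    (h : q ≤ q') : a j q ≤ a j q' := by
  have : Monotone (fun q => a j q) := monotone_nat_of_le_succ (fun q => ha.2.2 j q)
  exact this h

end Stmt4Aux

open Stmt4Aux in
/-- Assume `λ^∞(A)` and `λ^∞(B)` are closed under pointwise multiplication. Then
there is a bijective `ℂ`-algebra homomorphism `Φ : λ^∞(A) → λ^∞(B)` iff there is a
bijection `σ : ℕ → ℕ` satisfying conditions (α) and (β). -/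
theorem stmt_4 (a b : ℕ → ℕ → ℝ) (ha : IsKotheMatrix a) (hb : IsKotheMatrix b)
    (hamul : ∀ ξ ∈ lambdaInf a, ∀ η ∈ lambdaInf a, ξ * η ∈ lambdaInf a)
    (hbmul : ∀ ξ ∈ lambdaInf b, ∀ η ∈ lambdaInf b, ξ * η ∈ lambdaInf b) :
    (∃ Φ : (ℕ → ℂ) → (ℕ → ℂ),
        Set.BijOn Φ (lambdaInf a) (lambdaInf b) ∧
        (∀ ξ ∈ lambdaInf a, ∀ η ∈ lambdaInf a, Φ (ξ + η) = Φ ξ + Φ η) ∧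
        (∀ (c : ℂ), ∀ ξ ∈ lambdaInf a, Φ (c • ξ) = c • Φ ξ) ∧
        (∀ ξ ∈ lambdaInf a, ∀ η ∈ lambdaInf a, Φ (ξ * η) = Φ ξ * Φ η)) ↔
      (∃ σ : ℕ → ℕ, Function.Bijective σ ∧
        (∀ q : ℕ, ∃ r : ℕ, ∃ C : ℝ, 0 < C ∧ ∀ j : ℕ, a (σ j) q ≤ C * b j r) ∧
        (∀ r' : ℕ, ∃ q' : ℕ, ∃ C' : ℝ, 0 < C' ∧ ∀ j : ℕ, b j r' ≤ C' * a (σ j) q')) := by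
  constructor
  · rintro ⟨Φ, hbij, hadd, hsmul, hmul⟩
    have hmaps := hbij.mapsTo
    have hinj := hbij.injOn
    have hsurj := hbij.surjOn
    have h0a := zero_mem a
    have hΦ0 : Φ 0 = 0 := by
      have h := hsmul 0 0 h0a
      simpa using h
    -- idempotent values
    have hE01 : ∀ j k, Φ (eSeq j) k = 0 ∨ Φ (eSeq j) k = 1 := by
      intro j k
      have h := hmul _ (eSeq_mem ha.1 j) _ (eSeq_mem ha.1 j)
      rw [eSeq_mul_self] at h
      have hx : Φ (eSeq j) k = Φ (eSeq j) k * Φ (eSeq j) k := by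
        have := congrFun h k
        rwa [Pi.mul_apply] at this
      have h2 : Φ (eSeq j) k * (Φ (eSeq j) k - 1) = 0 := by ring_nf; linear_combination -hx
      rcases mul_eq_zero.mp h2 with h3 | h3
      · exact Or.inl h3
      · exact Or.inr (by linear_combination h3)
    have hEorth : ∀ i j, i ≠ j → Φ (eSeq i) * Φ (eSeq j) = 0 := by
      intro i j hij
      rw [← hmul _ (eSeq_mem ha.1 i) _ (eSeq_mem ha.1 j), eSeq_mul_ne hij, hΦ0]
    -- a key computation: Φ (ξ * eSeq i) = eSeq k * Φ (eSeq i) whenever Φ ξ = eSeq k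
    have hker : ∀ ξ, ξ ∈ lambdaInf a → ∀ k i, Φ ξ = eSeq k → Φ (eSeq i) k = 0 → ξ i = 0 := by
      intro ξ hξ k i hΦξ hik
      have h1 : Φ (ξ * eSeq i) = eSeq k * Φ (eSeq i) := by
        rw [hmul _ hξ _ (eSeq_mem ha.1 i), hΦξ]
      have h2 : eSeq k * Φ (eSeq i) = 0 := by
        funext m
        by_cases hm : m = k
        · subst hm; simp [eSeq, hik]
        · simp [eSeq, hm]
      have h3 : ξ * eSeq i = 0 :=
        hinj (hamul _ hξ _ (eSeq_mem ha.1 i)) h0a (by rw [h1, h2, hΦ0])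
      have := congrFun h3 i
      simpa [eSeq] using this
    have claimA : ∀ k, ∃ j, Φ (eSeq j) k ≠ 0 := by
      intro k
      by_contra hA
      push_neg at hA
      obtain ⟨ξ, hξmem, hΦξ⟩ := hsurj (eSeq_mem hb.1 k)
      have hz : ξ = 0 := funext fun i => hker ξ hξmem k i hΦξ (hA i)
      rw [hz, hΦ0] at hΦξ
      exact eSeq_ne_zero k hΦξ.symm
    have claimB : ∀ j k k', Φ (eSeq j) k ≠ 0 → Φ (eSeq j) k' ≠ 0 → k = k' := by
      intro j k k' hk hk'
      by_contra hkk'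
      obtain ⟨ξ, hξmem, hΦξ⟩ := hsurj (eSeq_mem hb.1 k)
      have hξi : ∀ i, i ≠ j → ξ i = 0 := by
        intro i hij
        have hI : Φ (eSeq i) k = 0 := by
          have h := congrFun (hEorth i j hij) k
          simp only [Pi.mul_apply, Pi.zero_apply] at h
          rcases mul_eq_zero.mp h with h' | h'
          · exact h'
          · exact absurd h' hk
        exact hker ξ hξmem k i hΦξ hI
      have hxi : ξ = ξ j • eSeq j := by
        funext m
        by_cases hm : m = j
        · subst hm; simp [eSeq]
        · simp [eSeq, hm, hξi m hm]
      have h4 : eSeq k = ξ j • Φ (eSeq j) := by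
        have h5 : Φ ξ = ξ j • Φ (eSeq j) := by
          conv_lhs => rw [hxi]
          exact hsmul _ _ (eSeq_mem ha.1 j)
        rw [← hΦξ, h5]
      have hk1 : (1 : ℂ) = ξ j * Φ (eSeq j) k := by
        have := congrFun h4 k
        simpa [eSeq] using this
      have hk0 : (0 : ℂ) = ξ j * Φ (eSeq j) k' := by
        have := congrFun h4 k'
        simpa [eSeq, Ne.symm hkk'] using this
      rcases mul_eq_zero.mp hk0.symm with h' | h'
      · rw [h', zero_mul] at hk1; exact one_ne_zero hk1
      · exact hk' h'
    have hEne : ∀ j, ∃ k, Φ (eSeq j) k ≠ 0 := by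
      intro j
      by_contra h
      push_neg at h
      have hz : Φ (eSeq j) = 0 := funext h
      have : eSeq j = 0 := hinj (eSeq_mem ha.1 j) h0a (by rw [hz, hΦ0])
      exact eSeq_ne_zero j this
    choose τ hτ using hEne
    have hτ1 : ∀ j, Φ (eSeq j) (τ j) = 1 := fun j => (hE01 j (τ j)).resolve_left (hτ j)
    have hτinj : Function.Injective τ := by
      intro i j hij
      by_contra hne
      have h1 : Φ (eSeq j) (τ i) = 1 := by rw [hij]; exact hτ1 j
      have h := congrFun (hEorth i j hne) (τ i)
      rw [Pi.mul_apply, hτ1 i, h1, Pi.zero_apply] at h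
      norm_num at h
    have hτsurj : Function.Surjective τ := by
      intro k
      obtain ⟨j, hj⟩ := claimA k
      exact ⟨j, (claimB j k (τ j) hj (hτ j)).symm⟩
    let τe : ℕ ≃ ℕ := Equiv.ofBijective τ ⟨hτinj, hτsurj⟩
    have hτe : ∀ j, τe j = τ j := fun j => rfl
    have hτeσ : ∀ k, τ (τe.symm k) = k := fun k => τe.apply_symm_apply k
    have hτeσ' : ∀ j, τe.symm (τ j) = j := fun j => τe.symm_apply_apply j
    have hcomp : ∀ ξ, ξ ∈ lambdaInf a → ∀ k, Φ ξ k = ξ (τe.symm k) := by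
      intro ξ hξ k
      set j := τe.symm k with hj
      have hone : Φ (eSeq j) k = 1 := by
        rw [← hτeσ k]; exact hτ1 j
      have h1 : Φ ξ * Φ (eSeq j) = ξ j • Φ (eSeq j) := by
        rw [← hmul _ hξ _ (eSeq_mem ha.1 j), mul_eSeq, hsmul _ _ (eSeq_mem ha.1 j)]
      have h := congrFun h1 k
      rw [Pi.mul_apply, Pi.smul_apply, hone] at h
      simpa using h
    refine ⟨fun k => τe.symm k, τe.symm.bijective, ?_, ?_⟩
    · -- condition (α)
      intro q
      have := key_lemma (fun j r => b j r) (fun j q => a (τe.symm j) q)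
        hb.1 (fun j q => ha.1 _ q) hb.2.1 (fun j => kothe_mono hb j)
        ?_ q
      · obtain ⟨r, C, hC, hle⟩ := this
        exact ⟨r, C, hC, hle⟩
      · intro ζ hζ
        obtain ⟨ξ, hξmem, hΦξ⟩ := hsurj (show ζ ∈ lambdaInf b from hζ)
        intro q'
        obtain ⟨C, hC⟩ := hξmem q'
        refine ⟨C, fun j => ?_⟩
        have hval : ζ j = ξ (τe.symm j) := by rw [← hΦξ]; exact hcomp ξ hξmem j
        rw [hval]
        exact hC _
    · -- condition (β)
      intro r
      have := key_lemma (fun j q => a (τe.symm j) q) (fun j r => b j r)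
        (fun j q => ha.1 _ q) hb.1 (fun j => ha.2.1 _) (fun j => kothe_mono ha _)
        ?_ r
      · obtain ⟨q, C, hC, hle⟩ := this
        exact ⟨q, C, hC, hle⟩
      · intro ζ hζ
        have hξmem : (fun k => ζ (τ k)) ∈ lambdaInf a := by
          intro q
          obtain ⟨C, hC⟩ := hζ q
          refine ⟨C, fun k => ?_⟩
          have h6 : ‖ζ (τ k)‖ * a (τe.symm (τ k)) q ≤ C := hC (τ k)
          rw [hτeσ' k] at h6
          exact h6
        have hmem2 := hmaps hξmem
        intro r'
        obtain ⟨C, hC⟩ := hmem2 r'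
        refine ⟨C, fun j => ?_⟩
        have hval : Φ (fun k => ζ (τ k)) j = ζ j := by
          rw [hcomp _ hξmem j, hτeσ j]
        rw [← hval]
        exact hC j
  · rintro ⟨σ, hσbij, hα, hβ⟩
    let e : ℕ ≃ ℕ := Equiv.ofBijective σ hσbij
    have he : ∀ j, e j = σ j := fun j => rfl
    refine ⟨fun ξ => fun j => ξ (σ j), ⟨?_, ?_, ?_⟩, ?_, ?_, ?_⟩
    · -- MapsTo
      intro ξ hξ r
      obtain ⟨q', C', hC', hβ'⟩ := hβ r
      obtain ⟨D, hD⟩ := hξ q'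
      refine ⟨C' * D, fun j => ?_⟩
      calc ‖ξ (σ j)‖ * b j r ≤ ‖ξ (σ j)‖ * (C' * a (σ j) q') :=
            mul_le_mul_of_nonneg_left (hβ' j) (norm_nonneg _)
        _ = C' * (‖ξ (σ j)‖ * a (σ j) q') := by ring
        _ ≤ C' * D := mul_le_mul_of_nonneg_left (hD (σ j)) hC'.le
    · -- InjOn
      intro ξ _ η _ h
      funext k
      obtain ⟨j, hj⟩ := hσbij.2 k
      have := congrFun h j
      simpa [hj] using this
    · -- SurjOn
      intro η hη
      refine ⟨fun k => η (e.symm k), ?_, ?_⟩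
      · intro q
        obtain ⟨r, C, hC, hα'⟩ := hα q
        obtain ⟨D, hD⟩ := hη r
        refine ⟨C * D, fun k => ?_⟩
        have hk : σ (e.symm k) = k := e.apply_symm_apply k
        calc ‖η (e.symm k)‖ * a k q = ‖η (e.symm k)‖ * a (σ (e.symm k)) q := by rw [hk]
          _ ≤ ‖η (e.symm k)‖ * (C * b (e.symm k) r) :=
              mul_le_mul_of_nonneg_left (hα' _) (norm_nonneg _)
          _ = C * (‖η (e.symm k)‖ * b (e.symm k) r) := by ring
          _ ≤ C * D := mul_le_mul_of_nonneg_left (hD _) hC.le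
      · funext j
        show η (e.symm (σ j)) = η j
        rw [show e.symm (σ j) = j from e.symm_apply_apply j]
    · intro ξ _ η _; rfl
    · intro c ξ _; rfl
    · intro ξ _ η _; rfl
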